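/- arXiv:2601.20502 — 5 statements merged into one kernel-verified Lean document; each statement's English description precedes it below -/
import Mathlib

section
/- Let X, X', Y, Y' be real-valued random variables on a common probability space such that X is integrable, X' ≤ 0 almost surely, Y and Y' have the same distribution, and X + X' ≥ Y - Y' almost surely. Then E[X] ≥ 0, and if E[X] = 0 then X' = 0 almost surely. -/
/-! Clipping `Y` and `Y'` at `±n` gives bounded variables `clip n Y - clip n Y'` of mean zero,
dominated by `|Y - Y'|`, converging to `Y - Y'`, and with positive part at most `(Y - Y')⁺ ≤ X⁺`
(clipping is monotone and `1`-Lipschitz). Mean zero turns the bound on the positive part into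
the `L¹` bound `2 E[X⁺]`, so `Y - Y'` is integrable by Fatou and has mean zero by dominated
convergence. Hence `E[X] ≥ E[Y - Y'] = 0`, and if `E[X] = 0` the nonnegative `X - (Y - Y')`
vanishes a.s., which forces `X' ≥ 0`. -/

open MeasureTheory ProbabilityTheory Filter Topology

noncomputable def clip (c t : ℝ) : ℝ := max (-c) (min c t)

lemma lipschitzWith_clip (c : ℝ) : LipschitzWith 1 (clip c) :=
  (LipschitzWith.id.const_min c).const_max (-c)

lemma continuous_clip (c : ℝ) : Continuous (clip c) :=
  (lipschitzWith_clip c).continuous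

lemma monotone_clip (c : ℝ) : Monotone (clip c) :=
  fun _ _ h => max_le_max le_rfl (min_le_min le_rfl h)

lemma abs_clip_le {c : ℝ} (hc : 0 ≤ c) (t : ℝ) : |clip c t| ≤ c :=
  abs_le.2 ⟨le_max_left _ _, max_le (by linarith) (min_le_left _ _)⟩

lemma clip_of_abs_le {c t : ℝ} (h : |t| ≤ c) : clip c t = t := by
  rw [abs_le] at h
  rw [clip, min_eq_right h.2, max_eq_right h.1]

lemma abs_clip_sub_clip_le (c a b : ℝ) : |clip c a - clip c b| ≤ |a - b| := by
  simpa [Real.dist_eq] using (lipschitzWith_clip c).dist_le_mul a b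

lemma clip_sub_clip_le (c a b : ℝ) : clip c a - clip c b ≤ max (a - b) 0 := by
  rcases le_total a b with h | h
  · exact (sub_nonpos.2 (monotone_clip c h)).trans (le_max_right _ _)
  · calc clip c a - clip c b ≤ |a - b| := (le_abs_self _).trans (abs_clip_sub_clip_le c a b)
      _ = a - b := abs_of_nonneg (sub_nonneg.2 h)
      _ ≤ max (a - b) 0 := le_max_left _ _

lemma eventually_clip_eq (t : ℝ) : ∀ᶠ n : ℕ in atTop, clip n t = t := by
  filter_upwards [eventually_ge_atTop ⌈|t|⌉₊] with n hn
  exact clip_of_abs_le ((Nat.le_ceil _).trans (by exact_mod_cast hn))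

lemma tendsto_clip_sub_clip (a b : ℝ) :
    Tendsto (fun n : ℕ => clip n a - clip n b) atTop (𝓝 (a - b)) :=
  tendsto_const_nhds.congr' <| by
    filter_upwards [eventually_clip_eq a, eventually_clip_eq b] with n ha hb
    rw [ha, hb]

lemma abs_eq_two_mul_max_zero_sub (x : ℝ) : |x| = 2 * max x 0 - x := by
  rcases le_total x 0 with h | h
  · rw [abs_of_nonpos h, max_eq_right h]; ring
  · rw [abs_of_nonneg h, max_eq_left h]; ring

lemma integrable_clip_comp {Ω : Type*} [MeasurableSpace Ω] {μ : Measure Ω}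
    [IsFiniteMeasure μ] {Z : Ω → ℝ} (hZ : AEMeasurable Z μ) (n : ℕ) :
    Integrable (fun ω => clip n (Z ω)) μ :=
  .of_bound ((continuous_clip n).measurable.comp_aemeasurable hZ).aestronglyMeasurable n
    (ae_of_all _ fun _ => abs_clip_le n.cast_nonneg _)

namespace ProbabilityTheory.IdentDistrib

variable {Ω : Type*} [MeasurableSpace Ω] {μ : Measure Ω} [IsFiniteMeasure μ] {Y Y' : Ω → ℝ}

lemma integrable_clip_sub_clip (h : IdentDistrib Y Y' μ μ) (n : ℕ) :
    Integrable (fun ω => clip n (Y ω) - clip n (Y' ω)) μ :=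
  (integrable_clip_comp h.aemeasurable_fst n).sub (integrable_clip_comp h.aemeasurable_snd n)

lemma integral_clip_sub_clip (h : IdentDistrib Y Y' μ μ) (n : ℕ) :
    ∫ ω, (clip n (Y ω) - clip n (Y' ω)) ∂μ = 0 := by
  rw [integral_sub (integrable_clip_comp h.aemeasurable_fst n)
    (integrable_clip_comp h.aemeasurable_snd n), sub_eq_zero]
  exact (h.comp (continuous_clip n).measurable).integral_eq

lemma integral_abs_clip_sub_clip_le (h : IdentDistrib Y Y' μ μ) {G : Ω → ℝ}
    (hG : Integrable G μ) (hle : ∀ᵐ ω ∂μ, Y ω - Y' ω ≤ G ω) (n : ℕ) :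
    ∫ ω, |clip n (Y ω) - clip n (Y' ω)| ∂μ ≤ 2 * ∫ ω, max (G ω) 0 ∂μ := by
  have hI := h.integrable_clip_sub_clip n
  have hpos : ∫ ω, max (clip n (Y ω) - clip n (Y' ω)) 0 ∂μ ≤ ∫ ω, max (G ω) 0 ∂μ := by
    refine integral_mono_ae hI.pos_part hG.pos_part ?_
    filter_upwards [hle] with ω hω
    exact max_le ((clip_sub_clip_le n _ _).trans (max_le_max_right 0 hω)) (le_max_right _ _)
  simp_rw [abs_eq_two_mul_max_zero_sub]
  rw [integral_sub (hI.pos_part.const_mul 2) hI, integral_const_mul, h.integral_clip_sub_clip n]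
  linarith

theorem integrable_sub_of_ae_le (h : IdentDistrib Y Y' μ μ) {G : Ω → ℝ}
    (hG : Integrable G μ) (hle : ∀ᵐ ω ∂μ, Y ω - Y' ω ≤ G ω) :
    Integrable (fun ω => Y ω - Y' ω) μ := by
  have hI n := h.integrable_clip_sub_clip n
  have hnorm : ∀ n : ℕ, eLpNorm (fun ω => clip n (Y ω) - clip n (Y' ω)) 1 μ ≤
      ENNReal.ofReal (2 * ∫ ω, max (G ω) 0 ∂μ) := fun n => by
    rw [eLpNorm_one_eq_lintegral_enorm, ← ofReal_integral_norm_eq_lintegral_enorm (hI n)]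
    exact ENNReal.ofReal_le_ofReal (h.integral_abs_clip_sub_clip_le hG hle n)
  refine memLp_one_iff_integrable.1
    ⟨(h.aemeasurable_fst.sub h.aemeasurable_snd).aestronglyMeasurable,
    (Lp.eLpNorm_le_of_ae_tendsto (.of_forall hnorm) (fun n => (hI n).aestronglyMeasurable)
      (ae_of_all _ fun ω => tendsto_clip_sub_clip (Y ω) (Y' ω))).trans_lt ENNReal.ofReal_lt_top⟩

theorem integral_sub_eq_zero (h : IdentDistrib Y Y' μ μ)
    (hint : Integrable (fun ω => Y ω - Y' ω) μ) : ∫ ω, (Y ω - Y' ω) ∂μ = 0 := by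
  refine tendsto_nhds_unique (tendsto_integral_of_dominated_convergence (fun ω => |Y ω - Y' ω|)
    (fun n => (h.integrable_clip_sub_clip n).aestronglyMeasurable) hint.abs
    (fun n => ae_of_all _ fun ω => abs_clip_sub_clip_le n _ _)
    (ae_of_all _ fun ω => tendsto_clip_sub_clip (Y ω) (Y' ω))) ?_
  simp_rw [h.integral_clip_sub_clip]
  exact tendsto_const_nhds

end ProbabilityTheory.IdentDistrib

/-- If `X` is integrable, `X' ≤ 0` a.s., `Y` and `Y'` have the same law, and
`X + X' ≥ Y - Y'` a.s., then `E[X] ≥ 0`; and if `E[X] = 0` then `X' = 0` a.s. -/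
theorem stmt_1 {Ω : Type*} [MeasurableSpace Ω] (μ : Measure Ω) [IsProbabilityMeasure μ]
    (X X' Y Y' : Ω → ℝ)
    (hX : Integrable X μ)
    (hX' : ∀ᵐ ω ∂μ, X' ω ≤ 0)
    (hY : Measurable Y) (hY' : Measurable Y')
    (hlaw : μ.map Y = μ.map Y')
    (hineq : ∀ᵐ ω ∂μ, Y ω - Y' ω ≤ X ω + X' ω) :
    0 ≤ ∫ ω, X ω ∂μ ∧ (∫ ω, X ω ∂μ = 0 → ∀ᵐ ω ∂μ, X' ω = 0) := by
  have hident : IdentDistrib Y Y' μ μ := ⟨hY.aemeasurable, hY'.aemeasurable, hlaw⟩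
  have hle : ∀ᵐ ω ∂μ, Y ω - Y' ω ≤ X ω := by
    filter_upwards [hX', hineq] with ω h₁ h₂
    linarith
  have hint := hident.integrable_sub_of_ae_le hX hle
  have hzero := hident.integral_sub_eq_zero hint
  refine ⟨hzero ▸ integral_mono_ae hint hX hle, fun hX0 => ?_⟩
  have hgap : (fun ω => X ω - (Y ω - Y' ω)) =ᵐ[μ] 0 := by
    have hgap_int : Integrable (fun ω => X ω - (Y ω - Y' ω)) μ := hX.sub hint
    refine (integral_eq_zero_iff_of_nonneg_ae ?_ hgap_int).1 ?_
    · filter_upwards [hle] with ω h using sub_nonneg.2 h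
    · rw [integral_sub hX hint, hX0, hzero, sub_zero]
  filter_upwards [hgap, hineq, hX'] with ω h₀ h₁ h₂
  simp only [Pi.zero_apply] at h₀
  linarith
end

section
/- Let X = (X₁,X₂), X' = (X₁',X₂'), Y = (Y₁,Y₂), Y' = (Y₁',Y₂') be random variables with values in ℝ², such that both coordinates of X are integrable, X + X' ≥_lex Y - Y' almost surely, X' ≤_lex (0,0) almost surely, and Y has the same law as Y'. Then E[X] ≥_lex (0,0) in lexicographic order, and equality E[X] = (0,0) implies X' = (0,0) almost surely. -/
/-!
If `Z` and `Z'` have the same law, then `E[f(Z)] = E[f(Z')]` for every bounded monotone `f`, so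
`Z - Z' ≤ V` gives `E[f(Z' + V) - f(Z')] ≥ 0`. Taking for `f` the truncations at level `M` and
letting `M → ∞` (dominated by `|V|`, since truncation is 1-Lipschitz) yields `E[V] ≥ 0` without
any integrability of `Z`, `Z'`. If `E[V] = 0`, the same bound applied to `V - min(V - (Z - Z'), 1)`
forces `V = Z - Z'` a.s. The lexicographic statement follows by applying this to the first
coordinates and then, on the event where they are equal, to the second ones.
-/

open MeasureTheory

/-- The lexicographic order on `ℝ × ℝ`. -/
def lexLe (x y : ℝ × ℝ) : Prop := x.1 < y.1 ∨ (x.1 = y.1 ∧ x.2 ≤ y.2)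

open Filter Topology ProbabilityTheory

lemma lexLe.fst_le {a b c d : ℝ} (h : lexLe (a, b) (c, d)) : a ≤ c :=
  h.elim le_of_lt fun h => h.1.le

lemma lexLe.snd_le {a b c d : ℝ} (h : lexLe (a, b) (c, d)) (hac : a = c) : b ≤ d :=
  h.elim (fun h => absurd hac h.ne) And.right

noncomputable def truncate (M t : ℝ) : ℝ := max (min t M) (-M)

lemma truncate_mono (M : ℝ) : Monotone (truncate M) :=
  (monotone_id.min monotone_const).max monotone_const

lemma measurable_truncate (M : ℝ) : Measurable (truncate M) :=
  (measurable_id.min measurable_const).max measurable_const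

lemma abs_truncate_le {M : ℝ} (hM : 0 ≤ M) (t : ℝ) : |truncate M t| ≤ M :=
  abs_le.2 ⟨le_max_right _ _, max_le (min_le_right _ _) (by linarith)⟩

lemma abs_truncate_sub_truncate_le (M a b : ℝ) : |truncate M a - truncate M b| ≤ |a - b| :=
  calc |truncate M a - truncate M b| ≤ |min a M - min b M| := abs_max_sub_max_le_abs _ _ _
    _ ≤ max |a - b| |M - M| := abs_min_sub_min_le_max _ _ _ _
    _ = |a - b| := by simp

lemma truncate_eq_self {M t : ℝ} (h : |t| ≤ M) : truncate M t = t := by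
  obtain ⟨h₁, h₂⟩ := abs_le.1 h
  simp [truncate, min_eq_left h₂, max_eq_left h₁]

lemma tendsto_truncate (t : ℝ) : Tendsto (fun M : ℕ => truncate M t) atTop (𝓝 t) :=
  tendsto_atTop_of_eventually_const (i₀ := ⌈|t|⌉₊) fun _ hM =>
    truncate_eq_self ((Nat.le_ceil _).trans (Nat.cast_le.2 hM))

section SameLaw

variable {Ω : Type*} [MeasurableSpace Ω] {μ : Measure Ω} [IsFiniteMeasure μ] {Z Z' V : Ω → ℝ}

lemma integrable_truncate_comp {f : Ω → ℝ} (hf : AEMeasurable f μ) (M : ℕ) :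
    Integrable (fun ω => truncate M (f ω)) μ :=
  (integrable_const (M : ℝ)).mono'
    ((measurable_truncate M).comp_aemeasurable hf).aestronglyMeasurable
    (ae_of_all _ fun ω => abs_truncate_le M.cast_nonneg (f ω))

theorem integral_nonneg_of_identDistrib_of_sub_le (hZ : IdentDistrib Z Z' μ μ)
    (hV : Integrable V μ) (hle : ∀ᵐ ω ∂μ, Z ω - Z' ω ≤ V ω) : 0 ≤ ∫ ω, V ω ∂μ := by
  have hZ'V : AEMeasurable (fun ω => Z' ω + V ω) μ := hZ.aemeasurable_snd.add hV.aemeasurable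
  have hint_Z := integrable_truncate_comp hZ.aemeasurable_fst
  have hint_Z' := integrable_truncate_comp hZ.aemeasurable_snd
  have hint_Z'V := integrable_truncate_comp hZ'V
  have hnonneg (M : ℕ) : 0 ≤ ∫ ω, truncate M (Z' ω + V ω) - truncate M (Z' ω) ∂μ := by
    have hlaw : ∫ ω, truncate M (Z ω) ∂μ = ∫ ω, truncate M (Z' ω) ∂μ :=
      (hZ.comp (measurable_truncate M)).integral_eq
    rw [integral_sub (hint_Z'V M) (hint_Z' M), sub_nonneg, ← hlaw]
    refine integral_mono_ae (hint_Z M) (hint_Z'V M) ?_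
    filter_upwards [hle] with ω h
    exact truncate_mono M (by linarith)
  have hlim : Tendsto (fun M : ℕ => ∫ ω, truncate M (Z' ω + V ω) - truncate M (Z' ω) ∂μ) atTop
      (𝓝 (∫ ω, V ω ∂μ)) := by
    refine tendsto_integral_of_dominated_convergence (fun ω => |V ω|)
      (fun M => ((hint_Z'V M).sub (hint_Z' M)).aestronglyMeasurable) hV.abs
      (fun M => ae_of_all _ fun ω => ?_) (ae_of_all _ fun ω => ?_)
    · simpa using abs_truncate_sub_truncate_le M (Z' ω + V ω) (Z' ω)
    · simpa using (tendsto_truncate (Z' ω + V ω)).sub (tendsto_truncate (Z' ω))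
  exact ge_of_tendsto' hlim hnonneg

theorem ae_eq_sub_of_identDistrib_of_integral_eq_zero (hZ : IdentDistrib Z Z' μ μ)
    (hV : Integrable V μ) (hle : ∀ᵐ ω ∂μ, Z ω - Z' ω ≤ V ω) (h0 : ∫ ω, V ω ∂μ = 0) :
    ∀ᵐ ω ∂μ, V ω = Z ω - Z' ω := by
  set D : Ω → ℝ := fun ω => min (V ω - (Z ω - Z' ω)) 1
  have hD_nonneg : ∀ᵐ ω ∂μ, 0 ≤ D ω := by
    filter_upwards [hle] with ω h
    exact le_min (by linarith) zero_le_one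
  have hD : Integrable D μ := by
    refine (integrable_const (1 : ℝ)).mono'
      ((hV.aemeasurable.sub (hZ.aemeasurable_fst.sub hZ.aemeasurable_snd)).min
        aemeasurable_const).aestronglyMeasurable ?_
    filter_upwards [hD_nonneg] with ω h
    rw [Real.norm_eq_abs, abs_of_nonneg h]
    exact min_le_right _ _
  have hle' : ∀ᵐ ω ∂μ, Z ω - Z' ω ≤ V ω - D ω := by
    filter_upwards with ω
    linarith [min_le_left (V ω - (Z ω - Z' ω)) 1]
  have hD0 : ∫ ω, D ω ∂μ = 0 := by
    have := integral_nonneg_of_identDistrib_of_sub_le (V := fun ω => V ω - D ω) hZ (hV.sub hD) hle'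
    rw [integral_sub hV hD, h0] at this
    exact le_antisymm (by linarith) (integral_nonneg_of_ae hD_nonneg)
  filter_upwards [(integral_eq_zero_iff_of_nonneg_ae hD_nonneg hD).1 hD0] with ω h
  have : V ω - (Z ω - Z' ω) = 0 :=
    (min_eq_iff.1 h).elim And.left fun h => absurd h.1 one_ne_zero
  linarith

theorem integral_nonneg_of_identDistrib_of_sub_le_add (hZ : IdentDistrib Z Z' μ μ)
    (hV : Integrable V μ) {W : Ω → ℝ} (hW : ∀ᵐ ω ∂μ, W ω ≤ 0)
    (hle : ∀ᵐ ω ∂μ, Z ω - Z' ω ≤ V ω + W ω) :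
    0 ≤ ∫ ω, V ω ∂μ ∧ (∫ ω, V ω ∂μ = 0 → ∀ᵐ ω ∂μ, W ω = 0 ∧ Z ω - Z' ω = V ω + W ω) := by
  have hle' : ∀ᵐ ω ∂μ, Z ω - Z' ω ≤ V ω := by
    filter_upwards [hW, hle] with ω h h'
    linarith
  refine ⟨integral_nonneg_of_identDistrib_of_sub_le hZ hV hle', fun h0 => ?_⟩
  filter_upwards [hW, hle, ae_eq_sub_of_identDistrib_of_integral_eq_zero hZ hV hle' h0]
    with ω h h' h''
  constructor <;> linarith

end SameLaw

/-- Two-dimensional version: if both coordinates of `X` are integrable,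
`X + X' ≥_lex Y - Y'` a.s., `X' ≤_lex (0,0)` a.s., and `Y` has the same law as `Y'`,
then `E[X] ≥_lex (0,0)`, and `E[X] = (0,0)` implies `X' = (0,0)` a.s. -/
theorem stmt_2 {Ω : Type*} [MeasurableSpace Ω] (μ : Measure Ω) [IsProbabilityMeasure μ]
    (X₁ X₂ X₁' X₂' Y₁ Y₂ Y₁' Y₂' : Ω → ℝ)
    (hX₁ : Integrable X₁ μ) (hX₂ : Integrable X₂ μ)
    (hY₁ : Measurable Y₁) (hY₂ : Measurable Y₂)
    (hY₁' : Measurable Y₁') (hY₂' : Measurable Y₂')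
    (hlaw : μ.map (fun ω => (Y₁ ω, Y₂ ω)) = μ.map (fun ω => (Y₁' ω, Y₂' ω)))
    (hineq : ∀ᵐ ω ∂μ,
      lexLe (Y₁ ω - Y₁' ω, Y₂ ω - Y₂' ω) (X₁ ω + X₁' ω, X₂ ω + X₂' ω))
    (hX'le : ∀ᵐ ω ∂μ, lexLe (X₁' ω, X₂' ω) (0, 0)) :
    lexLe (0, 0) (∫ ω, X₁ ω ∂μ, ∫ ω, X₂ ω ∂μ) ∧
      ((∫ ω, X₁ ω ∂μ = 0 ∧ ∫ ω, X₂ ω ∂μ = 0) →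
        ∀ᵐ ω ∂μ, X₁' ω = 0 ∧ X₂' ω = 0) := by
  have hY₁law : IdentDistrib Y₁ Y₁' μ μ := ⟨hY₁.aemeasurable, hY₁'.aemeasurable, by
    simpa [Measure.fst_map_prodMk hY₂, Measure.fst_map_prodMk hY₂'] using
      congrArg Measure.fst hlaw⟩
  have hY₂law : IdentDistrib Y₂ Y₂' μ μ := ⟨hY₂.aemeasurable, hY₂'.aemeasurable, by
    simpa [Measure.snd_map_prodMk hY₁, Measure.snd_map_prodMk hY₁'] using
      congrArg Measure.snd hlaw⟩
  obtain ⟨hX₁_nonneg, hfst⟩ := integral_nonneg_of_identDistrib_of_sub_le_add hY₁law hX₁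
    (hX'le.mono fun _ h => h.fst_le) (hineq.mono fun _ h => h.fst_le)
  obtain hpos | hzero := hX₁_nonneg.lt_or_eq
  · exact ⟨Or.inl hpos, fun h => absurd h.1 hpos.ne'⟩
  have hfst := hfst hzero.symm
  obtain ⟨hX₂_nonneg, hsnd⟩ := integral_nonneg_of_identDistrib_of_sub_le_add hY₂law hX₂
    (by filter_upwards [hX'le, hfst] with ω h h' using h.snd_le h'.1)
    (by filter_upwards [hineq, hfst] with ω h h' using h.snd_le h'.2)
  refine ⟨Or.inr ⟨hzero, hX₂_nonneg⟩, fun h => ?_⟩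
  filter_upwards [hfst, hsnd h.2] with ω h₁ h₂ using ⟨h₁.1, h₂.1⟩
end

section
/- For every c with 0 < c < e, and for every random variable X taking values in [0,1], one has c² · E[e^{-cX}] · e^{-c·E[e^{-cX}]} < 1. -/
open MeasureTheory

theorem Real.sq_mul_mul_exp_neg_mul_lt_one {c : ℝ} (hc0 : 0 < c) (hce : c < Real.exp 1)
    (t : ℝ) : c ^ 2 * t * Real.exp (-(c * t)) < 1 :=
  calc c ^ 2 * t * Real.exp (-(c * t)) = c * (c * t * Real.exp (-(c * t))) := by ring
    _ ≤ c * Real.exp (-1) :=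
      mul_le_mul_of_nonneg_left (Real.mul_exp_neg_le_exp_neg_one _) hc0.le
    _ < Real.exp 1 * Real.exp (-1) := mul_lt_mul_of_pos_right hce (Real.exp_pos _)
    _ = 1 := by rw [← Real.exp_add, add_neg_cancel, Real.exp_zero]

theorem stmt_3_general {Ω : Type*} [MeasurableSpace Ω] (μ : Measure Ω)
    (c : ℝ) (hc0 : 0 < c) (hce : c < Real.exp 1)
    (X : Ω → ℝ) :
    c ^ 2 * (∫ ω, Real.exp (-(c * X ω)) ∂μ) *
      Real.exp (-(c * ∫ ω, Real.exp (-(c * X ω)) ∂μ)) < 1 :=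
  Real.sq_mul_mul_exp_neg_mul_lt_one hc0 hce _

/-- Subcriticality for Poisson(c) with `c < e`: for every random variable `X` with values
in `[0,1]`, one has `c² · E[e^{-cX}] · e^{-c E[e^{-cX}]} < 1`. -/
theorem stmt_3 {Ω : Type*} [MeasurableSpace Ω] (μ : Measure Ω) [IsProbabilityMeasure μ]
    (c : ℝ) (hc0 : 0 < c) (hce : c < Real.exp 1)
    (X : Ω → ℝ) (hXm : Measurable X) (hX : ∀ ω, X ω ∈ Set.Icc (0 : ℝ) 1) :
    c ^ 2 * (∫ ω, Real.exp (-(c * X ω)) ∂μ) *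
      Real.exp (-(c * ∫ ω, Real.exp (-(c * X ω)) ∂μ)) < 1 :=
  stmt_3_general μ c hc0 hce X
end

section
/- Let c > e. Then the equation x = e^{-c·e^{-cx}} has at least three solutions in (0,1); in particular the smallest solution γ̲ and the largest solution γ̄ satisfy γ̲ < γ̄, γ̄ = e^{-cγ̲} and γ̲ = e^{-cγ̄}. -/
/-!
Write `g t = e^{-ct}`, so the equation is `g (g x) = x`. Since `g` is antitone, it maps the
fixed-point set of `g ∘ g` to itself reversing order, so it swaps the least and the greatest fixed
points. For `c > e` the fixed point `y` of `g` lies in `(1/c, 1)`, whereas `g ∘ g` already has a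
fixed point in `[0, 1/c]` because `log c ≤ c / e`; thus the least fixed point lies below `y`, and
the greatest one, its image under `g`, lies above.
-/

open Real Set Function

theorem Antitone.apply_eq_of_isLeast_of_isGreatest_fixedPoints_comp {α : Type*} [LinearOrder α]
    {g : α → α} (hg : Antitone g) {x z : α} (hx : IsLeast (fixedPoints (g ∘ g)) x)
    (hz : IsGreatest (fixedPoints (g ∘ g)) z) : g x = z := by
  have hgx : IsFixedPt (g ∘ g) (g x) := congrArg g hx.1
  have hgz : IsFixedPt (g ∘ g) (g z) := congrArg g hz.1
  refine le_antisymm (hz.2 hgx) ?_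
  calc z = g (g z) := hz.1.symm
    _ ≤ g x := hg (hx.2 hgz)

theorem isCompact_fixedPoints_of_range_subset {α : Type*} [TopologicalSpace α] [T2Space α]
    {f : α → α} (hf : Continuous f) {K : Set α} (hK : IsCompact K) (hfK : range f ⊆ K) :
    IsCompact (fixedPoints f) :=
  hK.of_isClosed_subset (isClosed_fixedPoints hf) fun t ht => ht ▸ hfK (mem_range_self t)

theorem Real.log_le_mul_exp_neg_one {c : ℝ} (hc : 0 < c) : log c ≤ c * exp (-1) := by
  have h := add_one_le_exp (log c - 1)
  rwa [exp_sub, exp_log hc, sub_add_cancel, div_eq_mul_inv, ← exp_neg] at h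

section ExpNegMul

variable {c : ℝ}

theorem strictAnti_exp_neg_mul (hc : 0 < c) : StrictAnti fun t : ℝ => exp (-(c * t)) :=
  fun _ _ h => exp_lt_exp.mpr (neg_lt_neg (mul_lt_mul_of_pos_left h hc))

theorem exp_neg_mul_exp_neg_mul_mem_Ioo (hc : 0 < c) (t : ℝ) :
    exp (-(c * exp (-(c * t)))) ∈ Ioo 0 1 :=
  ⟨exp_pos _, exp_lt_one_iff.mpr (neg_lt_zero.mpr (mul_pos hc (exp_pos _)))⟩

theorem exp_neg_mul_exp_neg_mul_inv_le (hc : 0 < c) : exp (-(c * exp (-(c * c⁻¹)))) ≤ c⁻¹ := by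
  rw [mul_inv_cancel₀ hc.ne', ← exp_log (inv_pos.mpr hc), log_inv]
  exact exp_le_exp.mpr (neg_le_neg (log_le_mul_exp_neg_one hc))

theorem exists_exp_neg_mul_exp_neg_mul_eq_of_le_inv (hc : 0 < c) :
    ∃ w ∈ Icc 0 c⁻¹, exp (-(c * exp (-(c * w)))) = w := by
  have hcont : ContinuousOn (fun t => exp (-(c * exp (-(c * t)))) - t) (Icc 0 c⁻¹) := by
    fun_prop
  have h0 : (0 : ℝ) ∈ Icc (exp (-(c * exp (-(c * c⁻¹)))) - c⁻¹) (exp (-(c * exp (-(c * 0)))) - 0) :=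
    ⟨sub_nonpos.mpr (exp_neg_mul_exp_neg_mul_inv_le hc),
      sub_nonneg.mpr (exp_neg_mul_exp_neg_mul_mem_Ioo hc 0).1.le⟩
  obtain ⟨w, hw, hfix⟩ := intermediate_value_Icc' (inv_pos.mpr hc).le hcont h0
  exact ⟨w, hw, sub_eq_zero.mp hfix⟩

theorem exists_exp_neg_mul_eq_of_exp_one_lt (hc : exp 1 < c) :
    ∃ y ∈ Ioo c⁻¹ 1, exp (-(c * y)) = y := by
  have hc0 : 0 < c := (exp_pos 1).trans hc
  have hc1 : 1 < c := (one_lt_exp_iff.mpr one_pos).trans hc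
  have hcont : ContinuousOn (fun t => exp (-(c * t)) - t) (Icc c⁻¹ 1) := by fun_prop
  have hleft : c⁻¹ < exp (-(c * c⁻¹)) := by
    rw [mul_inv_cancel₀ hc0.ne', exp_neg]
    exact inv_strictAnti₀ (exp_pos 1) hc
  have hright : exp (-(c * 1)) < 1 := exp_lt_one_iff.mpr (by linarith)
  obtain ⟨y, hy, hfix⟩ := intermediate_value_Ioo' (inv_lt_one_of_one_lt₀ hc1).le hcont
    (show (0 : ℝ) ∈ Ioo _ _ from ⟨sub_neg.mpr hright, sub_pos.mpr hleft⟩)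
  exact ⟨y, hy, sub_eq_zero.mp hfix⟩

end ExpNegMul

/-- For `c > e`, the equation `x = e^{-c e^{-cx}}` has at least three solutions in `(0,1)`;
the smallest solution `x` and the largest solution `z` satisfy `x < z`, `z = e^{-cx}` and
`x = e^{-cz}`. -/
theorem stmt_17 (c : ℝ) (hc : Real.exp 1 < c) :
    ∃ x y z : ℝ,
      x ∈ Set.Ioo (0 : ℝ) 1 ∧ y ∈ Set.Ioo (0 : ℝ) 1 ∧ z ∈ Set.Ioo (0 : ℝ) 1 ∧
      x = Real.exp (-(c * Real.exp (-(c * x)))) ∧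
      y = Real.exp (-(c * Real.exp (-(c * y)))) ∧
      z = Real.exp (-(c * Real.exp (-(c * z)))) ∧
      x < y ∧ y < z ∧
      (∀ w ∈ Set.Ioo (0 : ℝ) 1,
        w = Real.exp (-(c * Real.exp (-(c * w)))) → x ≤ w ∧ w ≤ z) ∧
      z = Real.exp (-(c * x)) ∧ x = Real.exp (-(c * z)) := by
  have hc0 : 0 < c := (exp_pos 1).trans hc
  set g : ℝ → ℝ := fun t => exp (-(c * t))
  have hg : StrictAnti g := strictAnti_exp_neg_mul hc0
  have hmem : ∀ w ∈ fixedPoints (g ∘ g), w ∈ Ioo 0 1 := fun w hw =>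
    hw ▸ exp_neg_mul_exp_neg_mul_mem_Ioo hc0 w
  have hS : IsCompact (fixedPoints (g ∘ g)) := isCompact_fixedPoints_of_range_subset
    (by fun_prop) isCompact_Icc <| range_subset_iff.mpr fun t =>
      Ioo_subset_Icc_self (exp_neg_mul_exp_neg_mul_mem_Ioo hc0 t)
  obtain ⟨w₀, hw₀, hw₀fix⟩ := exists_exp_neg_mul_exp_neg_mul_eq_of_le_inv hc0
  obtain ⟨y, hy, hyfix⟩ := exists_exp_neg_mul_eq_of_exp_one_lt hc
  have hyS : IsFixedPt (g ∘ g) y := by simp only [IsFixedPt, comp_apply, g, hyfix]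
  obtain ⟨x, hx⟩ := hS.exists_isLeast ⟨w₀, hw₀fix⟩
  obtain ⟨z, hz⟩ := hS.exists_isGreatest ⟨w₀, hw₀fix⟩
  have hgx : g x = z := hg.antitone.apply_eq_of_isLeast_of_isGreatest_fixedPoints_comp hx hz
  have hxy : x < y := ((hx.2 hw₀fix).trans hw₀.2).trans_lt hy.1
  have hyz : y < z := by
    calc y = g y := hyfix.symm
      _ < g x := hg hxy
      _ = z := hgx
  refine ⟨x, y, z, hmem x hx.1, hmem y hyS, hmem z hz.1, hx.1.symm, hyS.symm, hz.1.symm, hxy, hyz,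
    fun w _ hw => ⟨hx.2 hw.symm, hz.2 hw.symm⟩, hgx.symm, ?_⟩
  calc x = g (g x) := hx.1.symm
    _ = g z := by rw [hgx]
end

section
/- Let φ̂ : [0,1] → [0,1] be twice continuously differentiable, increasing, with φ̂(1) = 1, and suppose that for every random variable X with values in [0,1], E[φ̂'(1-X)]·φ̂'(1 - E[φ̂(1-X)]) ≤ ρ for some ρ < 1. Let 𝒳 be the set of increasing càdlàg functions f : ℝ → [0,1], with metric d(f,g) = sup_ℝ |f - g|. Fix a probability measure ω on ℝ and define T : 𝒳 → 𝒳 by (Tf)(t) = φ̂(1 - E_{W∼ω}[ φ̂(1 - E_{W'∼ω}[ f(W' - W + t) ]) ]). Then T is a contraction: for all f, f' ∈ 𝒳, sup_ℝ |Tf - Tf'| ≤ ρ · sup_ℝ |f - f'|. -/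
/-!
Fix `t` and let `X, Y` be the inner averages `E_{W'}[f(W' - W + t)]` and
`E_{W'}[f'(W' - W + t)]`: random variables in `[0,1]` with `|X - Y| ≤ d := sup |f - f'|`.
Along `Z_s = Y + s (X - Y)` the map `s ↦ φ̂(1 - E[φ̂(1 - Z_s)])` has derivative of absolute value
at most `E[φ̂'(1 - Z_s)] · φ̂'(1 - E[φ̂(1 - Z_s)]) · d ≤ ρ d`, by subcriticality for the law of
`Z_s`, so the mean value inequality gives `|Tf(t) - Tf'(t)| ≤ ρ d`.

Since `deriv φ̂` carries junk values at the endpoints of `[0,1]`, the argument runs with a `C¹`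
extension of `φ̂` to `ℝ`. Subcriticality for its derivative follows by approximating a law on
`[0,1]` by laws on `(0,1)` with a small atom at a point `c` where `φ̂(1 - c) ∈ (0,1)`; the atom
keeps the outer argument `1 - E[φ̂(1 - X)]` inside `(0,1)` as well.
-/

open MeasureTheory Set Filter Topology

section IntegralBounds

variable {Ω : Type*} [MeasurableSpace Ω] {μ : Measure Ω}

lemma Continuous.integrable_of_ae_mem_Icc {ν : Measure ℝ} [IsFiniteMeasure ν] {h : ℝ → ℝ}
    (hh : Continuous h) {a b : ℝ} (hν : ∀ᵐ x ∂ν, x ∈ Icc a b) : Integrable h ν := by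
  have := hh.continuousOn.integrableOn_compact (μ := ν) (isCompact_Icc (a := a) (b := b))
  rwa [IntegrableOn, Measure.restrict_eq_self_of_ae_mem hν] at this

lemma MeasureTheory.Integrable.of_ae_mem_Icc [IsFiniteMeasure μ] {h : Ω → ℝ}
    (hh : AEStronglyMeasurable h μ) {a b : ℝ} (hI : ∀ᵐ w ∂μ, h w ∈ Icc a b) : Integrable h μ :=
  .of_bound hh (max |a| |b|) (hI.mono fun _ hw => abs_le_max_abs_abs hw.1 hw.2)

lemma integral_mem_Icc_of_ae_mem_Icc [IsProbabilityMeasure μ] {h : Ω → ℝ}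
    (hh : AEStronglyMeasurable h μ) {a b : ℝ} (hI : ∀ᵐ w ∂μ, h w ∈ Icc a b) :
    ∫ w, h w ∂μ ∈ Icc a b :=
  (convex_Icc a b).integral_mem isClosed_Icc hI (.of_ae_mem_Icc hh hI)

lemma abs_integral_mul_le_integral_mul [IsFiniteMeasure μ] {a b : Ω → ℝ} (ha : Integrable a μ)
    (ha0 : ∀ w, 0 ≤ a w) {d : ℝ} (hbd : ∀ w, |b w| ≤ d) :
    |∫ w, a w * b w ∂μ| ≤ (∫ w, a w ∂μ) * d := by
  rw [← integral_mul_const, ← Real.norm_eq_abs]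
  refine norm_integral_le_of_norm_le (ha.mul_const d) (Eventually.of_forall fun w => ?_)
  rw [Real.norm_eq_abs, abs_mul, abs_of_nonneg (ha0 w)]
  exact mul_le_mul_of_nonneg_left (hbd w) (ha0 w)

end IntegralBounds

noncomputable def derivIcc (φ : ℝ → ℝ) (x : ℝ) : ℝ :=
  derivWithin φ (Icc 0 1) (projIcc 0 1 zero_le_one x)

noncomputable def extendIcc (φ : ℝ → ℝ) (x : ℝ) : ℝ :=
  φ 0 + ∫ t in (0 : ℝ)..x, derivIcc φ t

section IccExtension

variable {φ : ℝ → ℝ} {x : ℝ}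

lemma derivIcc_of_mem (hx : x ∈ Icc (0 : ℝ) 1) : derivIcc φ x = derivWithin φ (Icc 0 1) x := by
  rw [derivIcc, projIcc_of_mem _ hx]

lemma derivIcc_of_mem_Ioo (hx : x ∈ Ioo (0 : ℝ) 1) : derivIcc φ x = deriv φ x := by
  rw [derivIcc_of_mem (Ioo_subset_Icc_self hx), derivWithin_of_mem_nhds (Icc_mem_nhds hx.1 hx.2)]

lemma derivIcc_nonneg (hφ : MonotoneOn φ (Icc 0 1)) (x : ℝ) : 0 ≤ derivIcc φ x :=
  hφ.derivWithin_nonneg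

lemma derivIcc_eq_zero_of_eqOn_one (hφ : EqOn φ 1 (Icc 0 1)) (x : ℝ) : derivIcc φ x = 0 := by
  rw [derivIcc, derivWithin_congr hφ (hφ (projIcc 0 1 zero_le_one x).2)]
  exact congrFun (derivWithin_const _ _) _

lemma continuous_derivIcc (hφ : ContDiffOn ℝ 1 φ (Icc 0 1)) : Continuous (derivIcc φ) :=
  (hφ.continuousOn_derivWithin (uniqueDiffOn_Icc one_pos) le_rfl).comp_continuous
    (continuous_subtype_val.comp continuous_projIcc) fun x => (projIcc 0 1 zero_le_one x).2

lemma exists_abs_derivIcc_le (hφ : ContDiffOn ℝ 1 φ (Icc 0 1)) :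
    ∃ M, ∀ x, |derivIcc φ x| ≤ M := by
  obtain ⟨M, hM⟩ := isCompact_Icc.exists_bound_of_continuousOn
    (hφ.continuousOn_derivWithin (uniqueDiffOn_Icc one_pos) le_rfl)
  exact ⟨M, fun x => hM _ (projIcc 0 1 zero_le_one x).2⟩

lemma hasDerivAt_extendIcc (hφ : ContDiffOn ℝ 1 φ (Icc 0 1)) (x : ℝ) :
    HasDerivAt (extendIcc φ) (derivIcc φ x) x :=
  ((continuous_derivIcc hφ).integral_hasStrictDerivAt 0 x).hasDerivAt.const_add _

lemma continuous_extendIcc (hφ : ContDiffOn ℝ 1 φ (Icc 0 1)) : Continuous (extendIcc φ) :=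
  continuous_iff_continuousAt.2 fun x => (hasDerivAt_extendIcc hφ x).continuousAt

lemma extendIcc_of_mem (hφ : ContDiffOn ℝ 1 φ (Icc 0 1)) (hx : x ∈ Icc (0 : ℝ) 1) :
    extendIcc φ x = φ x := by
  have hderiv : ∀ y ∈ Ioo 0 x, HasDerivWithinAt φ (derivIcc φ y) (Ioi y) y := fun y hy => by
    have hy' : y ∈ Ioo (0 : ℝ) 1 := ⟨hy.1, hy.2.trans_le hx.2⟩
    rw [derivIcc_of_mem_Ioo hy']
    exact ((hφ.differentiableOn one_ne_zero).differentiableAt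
      (Icc_mem_nhds hy'.1 hy'.2)).hasDerivAt.hasDerivWithinAt
  rw [extendIcc, intervalIntegral.integral_eq_sub_of_hasDeriv_right_of_le hx.1
    (hφ.continuousOn.mono (Icc_subset_Icc le_rfl hx.2)) hderiv
    ((continuous_derivIcc hφ).intervalIntegrable _ _)]
  ring

end IccExtension

noncomputable def perturb (ν : Measure ℝ) (c ε : ℝ) : Measure ℝ :=
  ENNReal.ofReal (1 - ε) • ν.map (fun x => (1 - ε) * x + ε / 2) +
    ENNReal.ofReal ε • Measure.dirac c

section Perturb

variable {ν : Measure ℝ} {c ε : ℝ}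

lemma one_sub_mul_add_half_mem_Icc {x : ℝ} (hx : x ∈ Icc (0 : ℝ) 1) (hε : ε ∈ Icc (0 : ℝ) 1) :
    (1 - ε) * x + ε / 2 ∈ Icc (ε / 2) (1 - ε / 2) := by
  constructor <;> nlinarith [hx.1, hx.2, hε.1, hε.2]

lemma isProbabilityMeasure_perturb [IsProbabilityMeasure ν] (hε : ε ∈ Icc (0 : ℝ) 1) :
    IsProbabilityMeasure (perturb ν c ε) := by
  have : IsProbabilityMeasure (ν.map fun x => (1 - ε) * x + ε / 2) :=
    Measure.isProbabilityMeasure_map (by fun_prop)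
  constructor
  simp [perturb, ← ENNReal.ofReal_add (sub_nonneg.2 hε.2) hε.1]

lemma ae_perturb_mem_Ioo (hν : ∀ᵐ x ∂ν, x ∈ Icc (0 : ℝ) 1) (hc : c ∈ Ioo (0 : ℝ) 1)
    (hε : ε ∈ Ioo (0 : ℝ) 1) : ∀ᵐ x ∂perturb ν c ε, x ∈ Ioo (0 : ℝ) 1 := by
  rw [perturb, ae_add_measure_iff]
  refine ⟨Measure.ae_smul_measure ?_ _, Measure.ae_smul_measure ?_ _⟩
  · refine (ae_map_iff (by fun_prop) measurableSet_Ioo).2 ?_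
    filter_upwards [hν] with x hx
    have := one_sub_mul_add_half_mem_Icc hx (Ioo_subset_Icc_self hε)
    exact ⟨by linarith [this.1, hε.1], by linarith [this.2, hε.1]⟩
  · exact (ae_dirac_iff measurableSet_Ioo).2 hc

lemma integral_perturb [IsProbabilityMeasure ν] (hν : ∀ᵐ x ∂ν, x ∈ Icc (0 : ℝ) 1)
    (hε : ε ∈ Icc (0 : ℝ) 1) {h : ℝ → ℝ} (hh : Continuous h) :
    ∫ x, h x ∂perturb ν c ε = (1 - ε) * ∫ x, h ((1 - ε) * x + ε / 2) ∂ν + ε * h c := by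
  have hA : AEMeasurable (fun x : ℝ => (1 - ε) * x + ε / 2) ν := by fun_prop
  have hint : Integrable h (ν.map fun x => (1 - ε) * x + ε / 2) := by
    refine hh.integrable_of_ae_mem_Icc (a := ε / 2) (b := 1 - ε / 2) ?_
    refine (ae_map_iff hA measurableSet_Icc).2 ?_
    filter_upwards [hν] with x hx using one_sub_mul_add_half_mem_Icc hx hε
  rw [perturb, integral_add_measure (hint.smul_measure ENNReal.ofReal_ne_top)
    ((integrable_dirac enorm_lt_top).smul_measure ENNReal.ofReal_ne_top),
    integral_smul_measure, integral_smul_measure, integral_map hA hh.aestronglyMeasurable,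
    integral_dirac, ENNReal.toReal_ofReal (sub_nonneg.2 hε.2), ENNReal.toReal_ofReal hε.1,
    smul_eq_mul, smul_eq_mul]

lemma tendsto_integral_perturb [IsProbabilityMeasure ν] (hν : ∀ᵐ x ∂ν, x ∈ Icc (0 : ℝ) 1)
    {h : ℝ → ℝ} (hh : Continuous h) :
    Tendsto (fun ε => ∫ x, h x ∂perturb ν c ε) (𝓝[>] 0) (𝓝 (∫ x, h x ∂ν)) := by
  obtain ⟨C, hC⟩ := (isCompact_Icc (a := (0 : ℝ)) (b := 1)).exists_bound_of_continuousOn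
    hh.continuousOn
  have hA : Tendsto (fun ε => ∫ x, h ((1 - ε) * x + ε / 2) ∂ν) (𝓝[>] 0) (𝓝 (∫ x, h x ∂ν)) := by
    refine tendsto_integral_filter_of_dominated_convergence (fun _ => C)
      (Eventually.of_forall fun ε => by fun_prop) ?_ (integrable_const C) ?_
    · filter_upwards [Ioo_mem_nhdsGT one_pos] with ε hε
      filter_upwards [hν] with x hx
      have := one_sub_mul_add_half_mem_Icc hx (Ioo_subset_Icc_self hε)
      exact hC _ ⟨by linarith [this.1, hε.1], by linarith [this.2, hε.1]⟩
    · refine Eventually.of_forall fun x => ?_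
      have : Tendsto (fun ε : ℝ => (1 - ε) * x + ε / 2) (𝓝[>] 0) (𝓝 x) := by
        have hcont : Continuous fun ε : ℝ => (1 - ε) * x + ε / 2 := by fun_prop
        exact (hcont.tendsto' 0 x (by simp)).mono_left nhdsWithin_le_nhds
      exact (hh.tendsto x).comp this
  have hlim : Tendsto (fun ε => (1 - ε) * ∫ x, h ((1 - ε) * x + ε / 2) ∂ν + ε * h c) (𝓝[>] 0)
      (𝓝 ((1 - 0) * ∫ x, h x ∂ν + 0 * h c)) := by
    have hε : Tendsto (fun ε : ℝ => ε) (𝓝[>] 0) (𝓝 0) := nhdsWithin_le_nhds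
    exact ((tendsto_const_nhds.sub hε).mul hA).add (hε.mul_const _)
  simp only [sub_zero, one_mul, zero_mul, add_zero] at hlim
  refine hlim.congr' ?_
  filter_upwards [Ioo_mem_nhdsGT one_pos] with ε hε
  exact (integral_perturb hν (Ioo_subset_Icc_self hε) hh).symm

end Perturb

-- Condition (2) of the paper with the uniform constant `ρ`; `φ'` stands for the derivative of `ψ`.
def Subcritical (φ' ψ : ℝ → ℝ) (ρ : ℝ) : Prop :=
  ∀ ν : Measure ℝ, IsProbabilityMeasure ν → (∀ᵐ x ∂ν, x ∈ Icc (0 : ℝ) 1) →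
    (∫ x, φ' (1 - x) ∂ν) * φ' (1 - ∫ x, ψ (1 - x) ∂ν) ≤ ρ

section Subcritical

variable {φ : ℝ → ℝ} {ρ : ℝ}

lemma exists_mem_Ioo_mem_Ioo_or_eqOn_one (hφ : ContinuousOn φ (Icc 0 1))
    (hmap : MapsTo φ (Icc 0 1) (Icc 0 1)) (hone : φ 1 = 1) :
    (∃ c ∈ Ioo (0 : ℝ) 1, φ c ∈ Ioo (0 : ℝ) 1) ∨ EqOn φ 1 (Icc 0 1) := by
  by_cases h : EqOn φ 1 (Icc 0 1)
  · exact Or.inr h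
  · obtain ⟨x, hx, hφx⟩ : ∃ x ∈ Icc (0 : ℝ) 1, φ x ≠ 1 := by
      simpa only [EqOn, not_forall, exists_prop, Pi.one_apply] using h
    have hlt : φ x < 1 := lt_of_le_of_ne (hmap hx).2 hφx
    obtain ⟨y, hy, hφy⟩ := intermediate_value_Icc hx.2
      (hφ.mono (Icc_subset_Icc hx.1 le_rfl))
      (show (φ x + 1) / 2 ∈ Icc (φ x) (φ 1) by rw [hone]; constructor <;> linarith)
    have hy0 : 0 < y := by
      by_contra! hy0
      rw [show y = x by linarith [hx.1, hy.1]] at hφy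
      linarith
    have hy1 : y < 1 := by
      by_contra! hy1
      rw [show y = 1 by linarith [hy.2], hone] at hφy
      linarith
    exact Or.inl ⟨y, ⟨hy0, hy1⟩, by rw [hφy]; constructor <;> linarith [(hmap hx).1]⟩

lemma subcritical_derivIcc_of_mem_Ioo (hφ : ContDiffOn ℝ 1 φ (Icc 0 1))
    (hmap : MapsTo φ (Icc 0 1) (Icc 0 1)) (hsub : Subcritical (deriv φ) φ ρ) {c₀ : ℝ}
    (hc₀ : c₀ ∈ Ioo (0 : ℝ) 1) (hφc₀ : φ c₀ ∈ Ioo (0 : ℝ) 1) :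
    Subcritical (derivIcc φ) (extendIcc φ) ρ := by
  intro ν hν hνI
  have hD : Continuous fun x => derivIcc φ (1 - x) := (continuous_derivIcc hφ).comp (by fun_prop)
  have hψ : Continuous fun x => extendIcc φ (1 - x) :=
    (continuous_extendIcc hφ).comp (by fun_prop)
  have hbound : ∀ ε ∈ Ioo (0 : ℝ) 1, (∫ x, derivIcc φ (1 - x) ∂perturb ν (1 - c₀) ε) *
      derivIcc φ (1 - ∫ x, extendIcc φ (1 - x) ∂perturb ν (1 - c₀) ε) ≤ ρ := by
    intro ε hε
    have := isProbabilityMeasure_perturb (ν := ν) (c := 1 - c₀) (Ioo_subset_Icc_self hε)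
    have hIoo := ae_perturb_mem_Ioo hνI (Ioo.one_sub_mem hc₀) hε
    have hIoo' : ∀ᵐ x ∂perturb ν (1 - c₀) ε, 1 - x ∈ Ioo (0 : ℝ) 1 :=
      hIoo.mono fun x hx => Ioo.one_sub_mem hx
    have hK : ∫ x, extendIcc φ (1 - ((1 - ε) * x + ε / 2)) ∂ν ∈ Icc (0 : ℝ) 1 := by
      refine integral_mem_Icc_of_ae_mem_Icc
        (h := fun x => extendIcc φ (1 - ((1 - ε) * x + ε / 2)))
        (hψ.comp (by fun_prop)).aestronglyMeasurable ?_
      filter_upwards [hνI] with x hx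
      have hA := one_sub_mul_add_half_mem_Icc hx (Ioo_subset_Icc_self hε)
      have hA' : 1 - ((1 - ε) * x + ε / 2) ∈ Icc (0 : ℝ) 1 :=
        ⟨by linarith [hA.2, hε.1], by linarith [hA.1, hε.1]⟩
      rw [extendIcc_of_mem hφ hA']
      exact hmap hA'
    have hout : 1 - ∫ x, extendIcc φ (1 - x) ∂perturb ν (1 - c₀) ε ∈ Ioo (0 : ℝ) 1 := by
      rw [integral_perturb hνI (Ioo_subset_Icc_self hε) hψ, sub_sub_cancel,
        extendIcc_of_mem hφ (Ioo_subset_Icc_self hc₀)]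
      constructor <;> nlinarith [hK.1, hK.2, hε.1, hε.2, hφc₀.1, hφc₀.2]
    rw [derivIcc_of_mem_Ioo hout,
      integral_congr_ae (hIoo'.mono fun x hx => derivIcc_of_mem_Ioo hx),
      integral_congr_ae (hIoo'.mono fun x hx => extendIcc_of_mem hφ (Ioo_subset_Icc_self hx))]
    exact hsub _ inferInstance (hIoo.mono fun x hx => Ioo_subset_Icc_self hx)
  have hlim := (tendsto_integral_perturb (c := 1 - c₀) hνI hD).mul
    (((continuous_derivIcc hφ).tendsto _).comp
      ((tendsto_integral_perturb (c := 1 - c₀) hνI hψ).const_sub 1))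
  exact le_of_tendsto hlim (eventually_of_mem (Ioo_mem_nhdsGT one_pos) hbound)

lemma subcritical_derivIcc (hφ : ContDiffOn ℝ 1 φ (Icc 0 1))
    (hmap : MapsTo φ (Icc 0 1) (Icc 0 1)) (hone : φ 1 = 1) (hsub : Subcritical (deriv φ) φ ρ) :
    Subcritical (derivIcc φ) (extendIcc φ) ρ := by
  rcases exists_mem_Ioo_mem_Ioo_or_eqOn_one hφ.continuousOn hmap hone with
    ⟨c₀, hc₀, hφc₀⟩ | hconst
  · exact subcritical_derivIcc_of_mem_Ioo hφ hmap hsub hc₀ hφc₀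
  · have hρ := hsub (Measure.dirac (1 / 2)) inferInstance
      ((ae_dirac_iff measurableSet_Icc).2 ⟨by norm_num, by norm_num⟩)
    rw [integral_dirac, ← derivIcc_of_mem_Ioo ⟨by norm_num, by norm_num⟩,
      derivIcc_eq_zero_of_eqOn_one hconst, zero_mul] at hρ
    intro ν _ _
    simpa only [derivIcc_eq_zero_of_eqOn_one hconst, integral_zero, zero_mul] using hρ

end Subcritical

section Contraction

variable {Ω : Type*} [MeasurableSpace Ω] {μ : Measure Ω}

lemma hasDerivAt_integral_comp_add_mul [IsFiniteMeasure μ] {ψ ψ' : ℝ → ℝ}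
    (hψ : ∀ x, HasDerivAt ψ (ψ' x) x) (hψ' : Continuous ψ') {M : ℝ} (hM : ∀ x, |ψ' x| ≤ M)
    {U V : Ω → ℝ} (hU : Measurable U) (hV : Measurable V) {K : ℝ} (hVK : ∀ w, |V w| ≤ K)
    {s₀ : ℝ} (hint : Integrable (fun w => ψ (U w + s₀ * V w)) μ) :
    HasDerivAt (fun s => ∫ w, ψ (U w + s * V w) ∂μ) (∫ w, ψ' (U w + s₀ * V w) * V w ∂μ) s₀ := by
  have hψc : Continuous ψ := continuous_iff_continuousAt.2 fun x => (hψ x).continuousAt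
  have hM0 : 0 ≤ M := (abs_nonneg _).trans (hM 0)
  refine (hasDerivAt_integral_of_dominated_loc_of_deriv_le (F := fun s w => ψ (U w + s * V w))
    (F' := fun s w => ψ' (U w + s * V w) * V w) (bound := fun _ => M * K)
    univ_mem (Eventually.of_forall fun s => ?_) hint ?_ ?_ (integrable_const _) ?_).2
  · exact (hψc.measurable.comp (hU.add (hV.const_mul s))).aestronglyMeasurable
  · exact ((hψ'.measurable.comp (hU.add (hV.const_mul s₀))).mul hV).aestronglyMeasurable
  · refine Eventually.of_forall fun w s _ => ?_
    rw [Real.norm_eq_abs, abs_mul]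
    exact mul_le_mul (hM _) (hVK w) (abs_nonneg _) hM0
  · exact Eventually.of_forall fun w s _ =>
      (hψ _).comp s ((hasDerivAt_mul_const (V w)).const_add (U w))

lemma Subcritical.integral_comp [IsProbabilityMeasure μ] {ψ ψ' : ℝ → ℝ} {ρ : ℝ}
    (hsub : Subcritical ψ' ψ ρ) (hψ : Continuous ψ) (hψ' : Continuous ψ') {Z : Ω → ℝ}
    (hZ : Measurable Z) (hZI : ∀ w, Z w ∈ Icc (0 : ℝ) 1) :
    (∫ w, ψ' (Z w) ∂μ) * ψ' (1 - ∫ w, ψ (Z w) ∂μ) ≤ ρ := by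
  have hZ' : Measurable fun w => 1 - Z w := measurable_const.sub hZ
  have := hsub (μ.map fun w => 1 - Z w) (Measure.isProbabilityMeasure_map hZ'.aemeasurable)
    ((ae_map_iff hZ'.aemeasurable measurableSet_Icc).2
      (Eventually.of_forall fun w => Icc.one_sub_mem (hZI w)))
  rw [integral_map hZ'.aemeasurable
      (by fun_prop : Continuous fun x => ψ' (1 - x)).aestronglyMeasurable,
    integral_map hZ'.aemeasurable
      (by fun_prop : Continuous fun x => ψ (1 - x)).aestronglyMeasurable] at this
  simpa only [sub_sub_cancel] using this

theorem abs_sub_le_of_subcritical [IsProbabilityMeasure μ] {ψ ψ' : ℝ → ℝ} {ρ M : ℝ}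
    (hψ : ∀ x, HasDerivAt ψ (ψ' x) x) (hψ' : Continuous ψ') (hψ'0 : ∀ x, 0 ≤ ψ' x)
    (hM : ∀ x, |ψ' x| ≤ M) (hmap : MapsTo ψ (Icc 0 1) (Icc 0 1)) (hsub : Subcritical ψ' ψ ρ)
    {X Y : Ω → ℝ} (hX : Measurable X) (hY : Measurable Y) (hXI : ∀ w, X w ∈ Icc (0 : ℝ) 1)
    (hYI : ∀ w, Y w ∈ Icc (0 : ℝ) 1) {d : ℝ} (hXY : ∀ w, |X w - Y w| ≤ d) :
    |ψ (1 - ∫ w, ψ (1 - X w) ∂μ) - ψ (1 - ∫ w, ψ (1 - Y w) ∂μ)| ≤ ρ * d := by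
  have hψc : Continuous ψ := continuous_iff_continuousAt.2 fun x => (hψ x).continuousAt
  set Z : ℝ → Ω → ℝ := fun s w => (1 - Y w) + s * (Y w - X w) with hZ
  have hZm : ∀ s, Measurable (Z s) := fun s => by fun_prop
  have hZI : ∀ s ∈ Icc (0 : ℝ) 1, ∀ w, Z s w ∈ Icc (0 : ℝ) 1 := fun s hs w => by
    have := (convex_Icc (0 : ℝ) 1).add_smul_sub_mem (Icc.one_sub_mem (hYI w))
      (Icc.one_sub_mem (hXI w)) hs
    simpa [hZ, smul_eq_mul, sub_sub_sub_cancel_left] using this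
  have hint : ∀ s ∈ Icc (0 : ℝ) 1, Integrable (fun w => ψ (Z s w)) μ := fun s hs =>
    .of_ae_mem_Icc (hψc.measurable.comp (hZm s)).aestronglyMeasurable
      (Eventually.of_forall fun w => hmap (hZI s hs w))
  set g : ℝ → ℝ := fun s => ∫ w, ψ (Z s w) ∂μ with hg
  set g' : ℝ → ℝ := fun s => ∫ w, ψ' (Z s w) * (Y w - X w) ∂μ
  have hderiv : ∀ s ∈ Icc (0 : ℝ) 1,
      HasDerivAt (fun s => ψ (1 - g s)) (ψ' (1 - g s) * -g' s) s :=
    fun s hs => (hψ _).comp s ((hasDerivAt_integral_comp_add_mul hψ hψ' hM (by fun_prop)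
      (by fun_prop) (fun w => by rw [abs_sub_comm]; exact hXY w)
      (hint s hs)).const_sub 1)
  have hbound : ∀ s ∈ Icc (0 : ℝ) 1, ‖ψ' (1 - g s) * -g' s‖ ≤ ρ * d := by
    intro s hs
    have : Nonempty Ω := nonempty_of_isProbabilityMeasure μ
    have hd : 0 ≤ d := (abs_nonneg _).trans (hXY (Classical.arbitrary Ω))
    have hg'd : |g' s| ≤ (∫ w, ψ' (Z s w) ∂μ) * d :=
      abs_integral_mul_le_integral_mul (.of_bound (hψ'.measurable.comp (hZm s)).aestronglyMeasurable
        M (Eventually.of_forall fun w => hM _)) (fun w => hψ'0 _)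
        (fun w => by rw [abs_sub_comm]; exact hXY w)
    have hkey := hsub.integral_comp (μ := μ) hψc hψ' (hZm s) (hZI s hs)
    calc ‖ψ' (1 - g s) * -g' s‖ = ψ' (1 - g s) * |g' s| := by
          rw [Real.norm_eq_abs, abs_mul, abs_neg, abs_of_nonneg (hψ'0 _)]
      _ ≤ ψ' (1 - g s) * ((∫ w, ψ' (Z s w) ∂μ) * d) := mul_le_mul_of_nonneg_left hg'd (hψ'0 _)
      _ = ((∫ w, ψ' (Z s w) ∂μ) * ψ' (1 - g s)) * d := by ring
      _ ≤ ρ * d := mul_le_mul_of_nonneg_right hkey hd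
  have := norm_image_sub_le_of_norm_deriv_le_segment_01'
    (fun s hs => (hderiv s hs).hasDerivWithinAt) fun s hs => hbound s (Ico_subset_Icc_self hs)
  simpa [hg, hZ] using this

lemma extendIcc_one_sub_integral [IsProbabilityMeasure μ] {φ : ℝ → ℝ}
    (hφ : ContDiffOn ℝ 1 φ (Icc 0 1)) (hmap : MapsTo φ (Icc 0 1) (Icc 0 1)) {X : Ω → ℝ}
    (hX : Measurable X) (hXI : ∀ w, X w ∈ Icc (0 : ℝ) 1) :
    extendIcc φ (1 - ∫ w, extendIcc φ (1 - X w) ∂μ) = φ (1 - ∫ w, φ (1 - X w) ∂μ) := by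
  have hX' : ∀ w, 1 - X w ∈ Icc (0 : ℝ) 1 := fun w => Icc.one_sub_mem (hXI w)
  have hψX : ∀ w, extendIcc φ (1 - X w) = φ (1 - X w) := fun w => extendIcc_of_mem hφ (hX' w)
  have hI := integral_mem_Icc_of_ae_mem_Icc (μ := μ) (h := fun w => extendIcc φ (1 - X w))
    ((continuous_extendIcc hφ).measurable.comp (by fun_prop)).aestronglyMeasurable
    (Eventually.of_forall fun w => hψX w ▸ hmap (hX' w))
  rw [extendIcc_of_mem hφ (Icc.one_sub_mem hI)]
  simp only [hψX]

theorem abs_sub_le_of_subcritical_deriv [IsProbabilityMeasure μ] {φ : ℝ → ℝ} {ρ : ℝ}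
    (hφ : ContDiffOn ℝ 1 φ (Icc 0 1)) (hmono : MonotoneOn φ (Icc 0 1))
    (hmap : MapsTo φ (Icc 0 1) (Icc 0 1)) (hone : φ 1 = 1) (hsub : Subcritical (deriv φ) φ ρ)
    {X Y : Ω → ℝ} (hX : Measurable X) (hY : Measurable Y) (hXI : ∀ w, X w ∈ Icc (0 : ℝ) 1)
    (hYI : ∀ w, Y w ∈ Icc (0 : ℝ) 1) {d : ℝ} (hXY : ∀ w, |X w - Y w| ≤ d) :
    |φ (1 - ∫ w, φ (1 - X w) ∂μ) - φ (1 - ∫ w, φ (1 - Y w) ∂μ)| ≤ ρ * d := by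
  obtain ⟨M, hM⟩ := exists_abs_derivIcc_le hφ
  rw [← extendIcc_one_sub_integral hφ hmap hX hXI, ← extendIcc_one_sub_integral hφ hmap hY hYI]
  exact abs_sub_le_of_subcritical (hasDerivAt_extendIcc hφ) (continuous_derivIcc hφ)
    (derivIcc_nonneg hmono) hM (fun x hx => (extendIcc_of_mem hφ hx).symm ▸ hmap hx)
    (subcritical_derivIcc hφ hmap hone hsub) hX hY hXI hYI hXY

end Contraction

section ShiftedAverage

variable {ω : Measure ℝ} [IsProbabilityMeasure ω] {f g : ℝ → ℝ}

lemma integrable_comp_sub_add (hf : Measurable f) (hfI : ∀ x, f x ∈ Icc (0 : ℝ) 1)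
    (w t : ℝ) : Integrable (fun w' => f (w' - w + t)) ω :=
  .of_ae_mem_Icc (hf.comp (by fun_prop)).aestronglyMeasurable
    (Eventually.of_forall fun _ => hfI _)

lemma integral_comp_sub_add_mem_Icc (hf : Measurable f) (hfI : ∀ x, f x ∈ Icc (0 : ℝ) 1)
    (w t : ℝ) : ∫ w', f (w' - w + t) ∂ω ∈ Icc (0 : ℝ) 1 :=
  integral_mem_Icc_of_ae_mem_Icc (hf.comp (by fun_prop)).aestronglyMeasurable
    (Eventually.of_forall fun _ => hfI _)

lemma measurable_integral_comp_sub_add (hf : Measurable f) (t : ℝ) :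
    Measurable fun w => ∫ w', f (w' - w + t) ∂ω :=
  (StronglyMeasurable.integral_prod_right (f := fun w w' => f (w' - w + t))
    (hf.comp (by fun_prop)).stronglyMeasurable).measurable

lemma abs_integral_comp_sub_add_sub_le (hf : Measurable f) (hg : Measurable g)
    (hfI : ∀ x, f x ∈ Icc (0 : ℝ) 1) (hgI : ∀ x, g x ∈ Icc (0 : ℝ) 1) {d : ℝ}
    (hd : ∀ x, |f x - g x| ≤ d) (w t : ℝ) :
    |∫ w', f (w' - w + t) ∂ω - ∫ w', g (w' - w + t) ∂ω| ≤ d := by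
  rw [← integral_sub (integrable_comp_sub_add hf hfI w t) (integrable_comp_sub_add hg hgI w t)]
  simpa using norm_integral_le_of_norm_le_const (μ := ω)
    (f := fun w' => f (w' - w + t) - g (w' - w + t)) (Eventually.of_forall fun w' => hd _)

end ShiftedAverage

theorem stmt_18_general (φhat : ℝ → ℝ)
    (hsmooth : ContDiffOn ℝ 2 φhat (Set.Icc 0 1))
    (hmono : MonotoneOn φhat (Set.Icc 0 1))
    (hmap : Set.MapsTo φhat (Set.Icc 0 1) (Set.Icc 0 1))
    (hone : φhat 1 = 1)
    (ρ : ℝ)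
    (hsub : ∀ ν : Measure ℝ, IsProbabilityMeasure ν → (∀ᵐ x ∂ν, x ∈ Set.Icc (0 : ℝ) 1) →
      (∫ x, deriv φhat (1 - x) ∂ν) * deriv φhat (1 - ∫ x, φhat (1 - x) ∂ν) ≤ ρ)
    (ω : Measure ℝ) [IsProbabilityMeasure ω]
    (T : (ℝ → ℝ) → (ℝ → ℝ))
    (hT : ∀ f t, T f t = φhat (1 - ∫ w, φhat (1 - ∫ w', f (w' - w + t) ∂ω) ∂ω))
    (f f' : ℝ → ℝ)
    (hf : Monotone f) (hf' : Monotone f')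
    (hfr : ∀ t, f t ∈ Set.Icc (0 : ℝ) 1) (hf'r : ∀ t, f' t ∈ Set.Icc (0 : ℝ) 1) :
    (⨆ t : ℝ, |T f t - T f' t|) ≤ ρ * ⨆ t : ℝ, |f t - f' t| := by
  have hbdd : BddAbove (range fun t => |f t - f' t|) :=
    ⟨1, by
      rintro _ ⟨t, rfl⟩
      simpa using abs_sub_le_of_le_of_le (hfr t).1 (hfr t).2 (hf'r t).1 (hf'r t).2⟩
  refine ciSup_le fun t => ?_
  rw [hT, hT]
  exact abs_sub_le_of_subcritical_deriv (hsmooth.of_le one_le_two) hmono hmap hone hsub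
    (measurable_integral_comp_sub_add hf.measurable t)
    (measurable_integral_comp_sub_add hf'.measurable t)
    (fun w => integral_comp_sub_add_mem_Icc hf.measurable hfr w t)
    (fun w => integral_comp_sub_add_mem_Icc hf'.measurable hf'r w t)
    (fun w => abs_integral_comp_sub_add_sub_le hf.measurable hf'.measurable hfr hf'r
      (le_ciSup hbdd) w t)

/-- Under the uniform subcriticality condition with constant `ρ < 1`, the belief-propagation
operator `T f t = φ̂(1 - E_W[φ̂(1 - E_{W'}[f(W'-W+t)])])` is a `ρ`-contraction for the sup
distance on increasing càdlàg functions `ℝ → [0,1]`. -/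
theorem stmt_18 (φhat : ℝ → ℝ)
    (hsmooth : ContDiffOn ℝ 2 φhat (Set.Icc 0 1))
    (hmono : MonotoneOn φhat (Set.Icc 0 1))
    (hmap : Set.MapsTo φhat (Set.Icc 0 1) (Set.Icc 0 1))
    (hone : φhat 1 = 1)
    (ρ : ℝ) (hρ : ρ < 1)
    (hsub : ∀ ν : Measure ℝ, IsProbabilityMeasure ν → (∀ᵐ x ∂ν, x ∈ Set.Icc (0 : ℝ) 1) →
      (∫ x, deriv φhat (1 - x) ∂ν) * deriv φhat (1 - ∫ x, φhat (1 - x) ∂ν) ≤ ρ)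
    (ω : Measure ℝ) [IsProbabilityMeasure ω]
    (T : (ℝ → ℝ) → (ℝ → ℝ))
    (hT : ∀ f t, T f t = φhat (1 - ∫ w, φhat (1 - ∫ w', f (w' - w + t) ∂ω) ∂ω))
    (f f' : ℝ → ℝ)
    (hf : Monotone f) (hf' : Monotone f')
    (hfr : ∀ t, f t ∈ Set.Icc (0 : ℝ) 1) (hf'r : ∀ t, f' t ∈ Set.Icc (0 : ℝ) 1)
    (hfc : ∀ t, ContinuousWithinAt f (Set.Ici t) t)
    (hf'c : ∀ t, ContinuousWithinAt f' (Set.Ici t) t) :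
    (⨆ t : ℝ, |T f t - T f' t|) ≤ ρ * ⨆ t : ℝ, |f t - f' t| :=
  stmt_18_general φhat hsmooth hmono hmap hone ρ hsub ω T hT f f' hf hf' hfr hf'r
end
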